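/- For n ≥ 4, the matrix L_n = [[0,0,1],[0,1,-1],[-1,-1,n]] induces a hyperbolic (Anosov) automorphism of the 3-torus: it has integer entries, determinant 1, and no eigenvalue of absolute value 1. -/

import Mathlib

open Matrix Polynomial ComplexConjugate

section Lmat

variable {R : Type*} [CommRing R]

def Lmat (a : R) : Matrix (Fin 3) (Fin 3) R := !![0, 0, 1; 0, 1, -1; -1, -1, a]

theorem det_Lmat (a : R) : (Lmat a).det = 1 := by
  simp [Lmat, det_fin_three]

theorem charpoly_Lmat (a : R) :
    (Lmat a).charpoly = X ^ 3 - C (a + 1) * X ^ 2 + C a * X - 1 := by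
  simp [Lmat, Matrix.charpoly, det_fin_three]
  ring

end Lmat

/-- If `μ` is a root on the unit circle, so is `conj μ = μ⁻¹`; comparing the cubic with its
reciprocal leaves `μ ^ 2 + μ = 0`. -/
theorem eq_neg_one_of_cubic_root_of_norm_eq_one {a : ℝ} {μ : ℂ} (hμ : ‖μ‖ = 1)
    (h : μ ^ 3 - (a + 1) * μ ^ 2 + a * μ - 1 = 0) : μ = -1 := by
  have hμ0 : μ ≠ 0 := norm_ne_zero_iff.mp (by rw [hμ]; exact one_ne_zero)
  have hconj : conj μ = μ⁻¹ := by
    rw [Complex.inv_def, Complex.normSq_eq_norm_sq, hμ]; simp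
  have hrecip : μ ^ 3 - a * μ ^ 2 + (a + 1) * μ - 1 = 0 := by
    have h' := congrArg conj h
    simp only [map_sub, map_add, map_mul, map_pow, map_one, map_zero, Complex.conj_ofReal,
      hconj] at h'
    field_simp at h'
    linear_combination -h'
  have hquad : μ * (μ + 1) = 0 := by linear_combination hrecip - h
  exact eq_neg_of_add_eq_zero_left ((mul_eq_zero.mp hquad).resolve_left hμ0)

theorem Ln_hyperbolic_general (n : ℤ) :
    (!![0, 0, 1; 0, 1, -1; -1, -1, n] : Matrix (Fin 3) (Fin 3) ℤ).det = 1 ∧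
    ∀ μ : ℂ, (!![0, 0, 1; 0, 1, -1; -1, -1, (n : ℂ)] :
        Matrix (Fin 3) (Fin 3) ℂ).charpoly.IsRoot μ → ‖μ‖ ≠ 1 := by
  refine ⟨det_Lmat n, fun μ hroot hμ => ?_⟩
  change (Lmat (n : ℂ)).charpoly.IsRoot μ at hroot
  have hcubic : μ ^ 3 - ((n : ℝ) + 1) * μ ^ 2 + (n : ℝ) * μ - 1 = 0 := by
    simpa [charpoly_Lmat] using hroot
  have hodd : ((2 * n + 3 : ℤ) : ℂ) = 0 := by
    rw [eq_neg_one_of_cubic_root_of_norm_eq_one hμ hcubic] at hcubic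
    push_cast at hcubic ⊢
    linear_combination -hcubic
  have : 2 * n + 3 = 0 := by exact_mod_cast hodd
  omega

/-- For `n ≥ 4`, the integer matrix `L n = [[0,0,1],[0,1,-1],[-1,-1,n]]` induces a hyperbolic
(Anosov) automorphism of the 3-torus: it has determinant 1 and no (complex) eigenvalue of
absolute value 1. -/
theorem Ln_hyperbolic (n : ℤ) (hn : 4 ≤ n) :
    (!![0, 0, 1; 0, 1, -1; -1, -1, n] : Matrix (Fin 3) (Fin 3) ℤ).det = 1 ∧
    ∀ μ : ℂ, (!![0, 0, 1; 0, 1, -1; -1, -1, (n : ℂ)] :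
        Matrix (Fin 3) (Fin 3) ℂ).charpoly.IsRoot μ → ‖μ‖ ≠ 1 :=
  Ln_hyperbolic_general n
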